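/- arXiv:2002.00357 — 5 statements merged into one kernel-verified Lean document; each statement's English description precedes it below -/
import Mathlib

section
/- For a positive probability distribution (p_{ijk}), (i,j,k) ≠ (0,0,0), on the three-way incomplete product, the following three ratios are all equal: COR(B,C|A=1)/CASR(B,C|A=0) = COR(A,C|B=1)/CASR(A,C|B=0) = COR(A,B|C=1)/CASR(A,B|C=0), and their common value equals the second order Aitchison–Silvey ratio ASR(A,B,C) = (p_{111} p_{100} p_{010} p_{001})/(p_{110} p_{101} p_{011}). -/
theorem mul_div_mul_div_div_div_mul {α : Type*} [DivisionCommMonoid α] (a b c d e f g : α) :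
    a * b / (c * d) / (e / (f * g)) = a * b * f * g / (c * d * e) := by
  rw [div_div_div_eq, mul_assoc (a * b)]

theorem stmt3_general (p100 p010 p001 p110 p101 p011 p111 : ℝ) :
    ((p111 * p100) / (p110 * p101)) / (p011 / (p010 * p001)) =
      ((p111 * p010) / (p110 * p011)) / (p101 / (p100 * p001)) ∧
    ((p111 * p010) / (p110 * p011)) / (p101 / (p100 * p001)) =
      ((p111 * p001) / (p101 * p011)) / (p110 / (p100 * p010)) ∧
    ((p111 * p001) / (p101 * p011)) / (p110 / (p100 * p010)) =
      (p111 * p100 * p010 * p001) / (p110 * p101 * p011) := by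
  simp only [mul_div_mul_div_div_div_mul]
  exact ⟨by ring, by ring, by ring⟩

/-- For a positive distribution on the three-way incomplete product, the ratio
COR/CASR does not depend on the conditioning variable, and the common value is
the second order Aitchison–Silvey ratio. -/
theorem stmt3 (p100 p010 p001 p110 p101 p011 p111 : ℝ)
    (h100 : 0 < p100) (h010 : 0 < p010) (h001 : 0 < p001)
    (h110 : 0 < p110) (h101 : 0 < p101) (h011 : 0 < p011) (h111 : 0 < p111)
    (hsum : p100 + p010 + p001 + p110 + p101 + p011 + p111 = 1) :
    ((p111 * p100) / (p110 * p101)) / (p011 / (p010 * p001)) =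
      ((p111 * p010) / (p110 * p011)) / (p101 / (p100 * p001)) ∧
    ((p111 * p010) / (p110 * p011)) / (p101 / (p100 * p001)) =
      ((p111 * p001) / (p101 * p011)) / (p110 / (p100 * p010)) ∧
    ((p111 * p001) / (p101 * p011)) / (p110 / (p100 * p010)) =
      (p111 * p100 * p010 * p001) / (p110 * p101 * p011) :=
  stmt3_general p100 p010 p001 p110 p101 p011 p111
end

section
/- The recursive decomposition of conditional AS ratios: for a positive distribution on the k-way incomplete product with k ≥ 3, a cell i with |φ(i)| > 2, and a single feature F̃ ∈ φ(i), one has CASR(φ(i) | F\φ(i) = 0) = COR(φ(i)\F̃ | F̃ = 1, F\φ(i) = 0) / CASR(φ(i)\F̃ | F̃ = 0, F\φ(i) = 0). -/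
variable {F : Type*} [Fintype F] [DecidableEq F]

/-- The conditional Aitchison–Silvey ratio of the features in `V`
(all other features conditioned to be 0), for cell probabilities `p`
indexed by nonempty subsets of features. -/
noncomputable def CASR (p : Finset F → ℝ) (V : Finset F) : ℝ :=
  (∏ J ∈ V.powerset.filter (fun J => J.Nonempty ∧ Even (V \ J).card), p J) /
  (∏ J ∈ V.powerset.filter (fun J => J.Nonempty ∧ Odd (V \ J).card), p J)

/-- The conditional odds ratio of the features in `V \ {f}`, conditioned on
the feature `f` being 1 and all features outside `V` being 0. -/
noncomputable def CORcond (p : Finset F → ℝ) (V : Finset F) (f : F) : ℝ :=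
  (∏ K ∈ (V.erase f).powerset.filter (fun K => Even ((V.erase f) \ K).card),
      p (insert f K)) /
  (∏ K ∈ (V.erase f).powerset.filter (fun K => Odd ((V.erase f) \ K).card),
      p (insert f K))

/-! Splitting the subsets `J ⊆ V` according to whether they contain `f` gives the cells with
`f = 1`, i.e. the numerator and denominator of the conditional odds ratio, and the subsets of
`V \ {f}`, for which `|V \ J|` is one more than `|(V \ {f}) \ J|`: the parity flips, so they
contribute the inverse of `CASR (V \ {f})`. -/

namespace Finset

variable {α M : Type*} [DecidableEq α] [CommMonoid M]

theorem prod_powerset_insert_filter_card_sdiff {a : α} {s : Finset α} (ha : a ∉ s)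
    (g : Finset α → M) (P Q : ℕ → Prop) [DecidablePred P] [DecidablePred Q]
    (hPQ : ∀ n, P (n + 1) ↔ Q n) :
    ∏ J ∈ (insert a s).powerset with J.Nonempty ∧ P (insert a s \ J).card, g J =
      (∏ K ∈ s.powerset with P (s \ K).card, g (insert a K)) *
        ∏ J ∈ s.powerset with J.Nonempty ∧ Q (s \ J).card, g J := by
  rw [prod_filter, prod_powerset_insert ha, prod_filter, prod_filter, mul_comm]
  congr 1 <;> refine prod_congr rfl fun J hJ => ?_
  · simp [insert_sdiff_insert, sdiff_insert_of_notMem ha]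
  · simp only [insert_sdiff_of_notMem _ (notMem_mono (mem_powerset.1 hJ) ha),
      card_insert_of_notMem (notMem_mono sdiff_subset ha), hPQ]

end Finset

omit [Fintype F] in
theorem CASR_insert (p : Finset F → ℝ) {f : F} {s : Finset F} (hf : f ∉ s) :
    CASR p (insert f s) = CORcond p (insert f s) f / CASR p s := by
  unfold CASR CORcond
  rw [Finset.erase_insert hf,
    Finset.prod_powerset_insert_filter_card_sdiff hf p Even Odd
      fun _ => Nat.even_add_one.trans Nat.not_even_iff_odd,
    Finset.prod_powerset_insert_filter_card_sdiff hf p Odd Even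
      fun _ => Nat.odd_add_one.trans Nat.not_odd_iff_even,
    div_div_eq_mul_div]
  ring

theorem stmt8_general (p : Finset F → ℝ) (V : Finset F) (f : F) (hf : f ∈ V) :
    CASR p V = CORcond p V f / CASR p (V.erase f) := by
  simpa only [Finset.insert_erase hf] using CASR_insert p (Finset.notMem_erase f V)

/-- Recursive decomposition of conditional AS ratios:
`CASR(φ(i) | F\φ(i)=0) = COR(φ(i)\F̃ | F̃=1, F\φ(i)=0) / CASR(φ(i)\F̃ | F̃=0, F\φ(i)=0)`. -/
theorem stmt8 (p : Finset F → ℝ) (hp : ∀ I : Finset F, I.Nonempty → 0 < p I)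
    (hk : 3 ≤ Fintype.card F) (V : Finset F) (hV : 2 < V.card)
    (f : F) (hf : f ∈ V) :
    CASR p V = CORcond p V f / CASR p (V.erase f) :=
  stmt8_general p V f hf
end

section
/- If an ascending class F_asc of subsets of F is nonempty (not equal to {∅}), then the HAS model design matrix A (rows indexed by the complementary descending class) does not contain the all-ones vector in its row space; specifically, the vector d with d(j) = +1 if the parity of |φ(j)| equals the parity of k and d(j) = −1 otherwise lies in Ker(A) and satisfies 1^T d ≠ 0. -/
/-!
Write `k = |F|`, so that `d J = (-1)^k (-1)^|J|`. Since `F_asc` is nonempty and ascending it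
contains `F`, so every row index `V` is a proper subset of `F`, and the alternating sum of
`(-1)^|J|` over the interval `[V, F]` vanishes: this is `A d = 0`. The same identity for `V = ∅`
gives `∑_{J ≠ ∅} d J = -(-1)^k ≠ 0`, and `yᵀ A = 1ᵀ` would force `1ᵀ d = yᵀ A d = 0`.
-/

open Matrix Finset

namespace Finset

variable {α R : Type*} [Ring R]

theorem sum_powerset_neg_one_pow_card_eq_zero {s : Finset α} (hs : s.Nonempty) :
    ∑ u ∈ s.powerset, (-1 : R) ^ #u = 0 := by
  exact_mod_cast congrArg (Int.cast : ℤ → R) (sum_powerset_neg_one_pow_card_of_nonempty hs)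

theorem sum_Icc_neg_one_pow_card_eq_zero [DecidableEq α] {s t : Finset α} (hst : s ⊂ t) :
    ∑ u ∈ Icc s t, (-1 : R) ^ #u = 0 := by
  have hdisj : ∀ u ∈ (t \ s).powerset, Disjoint s u := fun u hu =>
    disjoint_of_subset_right (mem_powerset.1 hu) disjoint_sdiff
  rw [Icc_eq_image_powerset hst.subset, sum_image fun u hu v hv huv => ?_]
  · rw [sum_congr rfl fun u hu => by rw [card_union_of_disjoint (hdisj u hu), pow_add],
      ← mul_sum, sum_powerset_neg_one_pow_card_eq_zero (sdiff_nonempty.2 hst.not_subset),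
      mul_zero]
  · rw [← union_sdiff_cancel_left (hdisj u hu), ← union_sdiff_cancel_left (hdisj v hv)]
    exact congrArg (· \ s) huv

theorem sum_superset_neg_one_pow_card_eq_zero [Fintype α] [DecidableEq α] {s : Finset α}
    (hs : s ≠ univ) : ∑ u, (if s ⊆ u then (-1 : R) ^ #u else 0) = 0 := by
  rw [← sum_filter, ← sum_Icc_neg_one_pow_card_eq_zero (ssubset_univ_iff.2 hs)]
  congr 1
  ext u
  simp

theorem sum_nonempty_eq_sum_sub_empty {M : Type*} [Fintype α] [AddCommGroup M]
    (f : Finset α → M) : ∑ u : {u : Finset α // u.Nonempty}, f u = ∑ u, f u - f ∅ := by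
  classical
  rw [← sum_erase_eq_sub (mem_univ ∅)]
  exact (sum_subtype _ (fun u => by simp [nonempty_iff_ne_empty]) f).symm

end Finset

theorem ite_mod_two_eq_neg_one_pow_mul {R : Type*} [Ring R] (m n : ℕ) :
    (if m % 2 = n % 2 then 1 else -1 : R) = (-1) ^ n * (-1) ^ m := by
  rw [neg_one_pow_eq_pow_mod_two (n := n), neg_one_pow_eq_pow_mod_two (n := m)]
  rcases Nat.mod_two_eq_zero_or_one m with hm | hm <;>
    rcases Nat.mod_two_eq_zero_or_one n with hn | hn <;> simp [hm, hn]

theorem nonempty_of_ne_singleton_empty {α : Type*} {S : Finset (Finset α)} (hS : S.Nonempty)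
    (hS' : S ≠ {∅}) : Nonempty α := by
  by_contra h
  rw [not_nonempty_iff] at h
  exact hS' (eq_singleton_iff_nonempty_unique_mem.2 ⟨hS, fun u _ => eq_empty_of_isEmpty u⟩)

theorem Matrix.not_exists_vecMul_eq_one {m n R : Type*} [Fintype m] [Fintype n] [Semiring R]
    {A : Matrix m n R} {d : n → R} (hAd : A *ᵥ d = 0) (hd : ∑ j, d j ≠ 0) :
    ¬ ∃ y : m → R, y ᵥ* A = fun _ => 1 := by
  rintro ⟨y, hy⟩
  have hy' : y ᵥ* A = 1 := hy
  apply hd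
  rw [← one_dotProduct, ← hy', ← dotProduct_mulVec, hAd, dotProduct_zero]

/-- If an ascending class `F_asc` is nonempty and not `{∅}`, then the HAS
design matrix `A` (rows indexed by the complementary descending class, entry
`1` iff the row subset is contained in the cell subset) does not contain the
all-ones vector in its row space; specifically the parity-sign vector `d`
lies in `Ker(A)` and has `1ᵀ d ≠ 0`. -/
theorem stmt9 (F : Type*) [Fintype F] [DecidableEq F]
    (Fasc : Finset (Finset F))
    (hAscending : ∀ S ∈ Fasc, ∀ T : Finset F, S ⊆ T → T ∈ Fasc)
    (hNonempty : Fasc.Nonempty) (hNe : Fasc ≠ {∅})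
    (A : Matrix {V : Finset F // V ∉ Fasc ∧ V.Nonempty}
        {J : Finset F // J.Nonempty} ℝ)
    (hA : ∀ V J, A V J = if V.1 ⊆ J.1 then 1 else 0)
    (d : {J : Finset F // J.Nonempty} → ℝ)
    (hd : ∀ J, d J = if (J.1.card % 2 = Fintype.card F % 2) then 1 else -1) :
    A.mulVec d = 0 ∧ (∑ J, d J) ≠ 0 ∧
      ¬ ∃ y : {V : Finset F // V ∉ Fasc ∧ V.Nonempty} → ℝ,
          Matrix.vecMul y A = fun _ => 1 := by
  obtain ⟨S, hS⟩ := hNonempty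
  have huniv : univ ∈ Fasc := hAscending S hS univ (subset_univ S)
  have : Nonempty F := nonempty_of_ne_singleton_empty ⟨S, hS⟩ hNe
  set c : ℝ := (-1) ^ Fintype.card F
  have hd' : ∀ J, d J = c * (-1) ^ #J.1 := fun J => by rw [hd, ite_mod_two_eq_neg_one_pow_mul]
  have hker : A *ᵥ d = 0 := by
    funext V
    have hV : V.1 ≠ univ := fun h => V.2.1 (h ▸ huniv)
    simp only [mulVec, dotProduct, hA, hd', mul_left_comm _ c, ite_mul, one_mul, zero_mul]
    rw [sum_nonempty_eq_sum_sub_empty (fun J => c * if V.1 ⊆ J then (-1) ^ #J else 0),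
      ← mul_sum, sum_superset_neg_one_pow_card_eq_zero hV,
      if_neg fun h => V.2.2.ne_empty (subset_empty.1 h)]
    simp
  have hsum : ∑ J, d J ≠ 0 := by
    simp only [hd']
    rw [sum_nonempty_eq_sum_sub_empty (fun J => c * (-1) ^ #J), ← mul_sum, ← powerset_univ,
      sum_powerset_neg_one_pow_card_eq_zero univ_nonempty]
    simp [c]
  exact ⟨hker, hsum, not_exists_vecMul_eq_one hker hsum⟩
end

section
/- A positive distribution (p_{ijk}) on the 7-cell three-way incomplete product satisfies the HAS conditional independence constraints p_{110}/(p_{100} p_{010}) = 1 and (p_{001} p_{111})/(p_{101} p_{011}) = 1 if and only if log p lies in the row space of the 5×7 matrix S_{[AC][BC]} with rows (1,0,0,1,1,0,1),(0,1,0,1,0,1,1),(0,0,1,0,1,1,1),(0,0,0,0,1,0,1),(0,0,0,0,0,1,1). -/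
open Matrix

/-!
With `l = log p`, taking logarithms turns the two constraints into `l₃ = l₀ + l₁` and
`l₂ + l₆ = l₄ + l₅`, i.e. orthogonality of `l` to the kernel of `S_{[AC][BC]}`, which is the row
space. A preimage `β` is read off the free cells `0, 1, 2, 4, 5`.
-/

def designMatrixACBC (R : Type*) [CommRing R] : Matrix (Fin 5) (Fin 7) R :=
  !![1,0,0,1,1,0,1;
     0,1,0,1,0,1,1;
     0,0,1,0,1,1,1;
     0,0,0,0,1,0,1;
     0,0,0,0,0,1,1]

section RowSpace

variable {R : Type*} [CommRing R]

theorem designMatrixACBC_transpose_mulVec (β : Fin 5 → R) :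
    (designMatrixACBC R)ᵀ *ᵥ β =
      ![β 0, β 1, β 2, β 0 + β 1, β 0 + β 2 + β 3, β 1 + β 2 + β 4,
        β 0 + β 1 + β 2 + β 3 + β 4] := by
  ext i
  fin_cases i <;>
    simp [designMatrixACBC, mulVec, dotProduct, Fin.sum_univ_succ] <;> ring

theorem mem_rowSpace_designMatrixACBC_iff (l : Fin 7 → R) :
    (∃ β : Fin 5 → R, l = (designMatrixACBC R)ᵀ *ᵥ β) ↔
      l 3 = l 0 + l 1 ∧ l 2 + l 6 = l 4 + l 5 := by
  simp only [designMatrixACBC_transpose_mulVec]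
  constructor
  · rintro ⟨β, rfl⟩
    constructor
    · simp
    · simp; ring
  · rintro ⟨h₃, h₆⟩
    refine ⟨![l 0, l 1, l 2, l 4 - l 0 - l 2, l 5 - l 1 - l 2], ?_⟩
    ext i
    fin_cases i <;> simp
    · exact h₃
    · linear_combination h₆

end RowSpace

theorem div_eq_one_iff_log_eq {x y : ℝ} (hx : 0 < x) (hy : 0 < y) :
    x / y = 1 ↔ Real.log x = Real.log y := by
  rw [div_eq_one_iff_eq hy.ne', Real.log_injOn_pos.eq_iff hx hy]

/-- A positive distribution `p` on the 7 cells (ordered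
(100),(010),(001),(110),(101),(011),(111)) satisfies the HAS conditional
independence constraints iff `log p` lies in the row space of `S_{[AC][BC]}`. -/
theorem stmt14 (p : Fin 7 → ℝ) (hp : ∀ i, 0 < p i)
    (S : Matrix (Fin 5) (Fin 7) ℝ)
    (hS : S = !![1,0,0,1,1,0,1;
                 0,1,0,1,0,1,1;
                 0,0,1,0,1,1,1;
                 0,0,0,0,1,0,1;
                 0,0,0,0,0,1,1]) :
    (p 3 / (p 0 * p 1) = 1 ∧ (p 2 * p 6) / (p 4 * p 5) = 1) ↔
      ∃ β : Fin 5 → ℝ, (fun i => Real.log (p i)) = Sᵀ.mulVec β := by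
  have hlog : ∀ i j, Real.log (p i * p j) = Real.log (p i) + Real.log (p j) := fun i j =>
    Real.log_mul (hp i).ne' (hp j).ne'
  have hprod : ∀ i j, 0 < p i * p j := fun i j => mul_pos (hp i) (hp j)
  subst hS
  change _ ↔ ∃ β, _ = (designMatrixACBC ℝ)ᵀ *ᵥ β
  rw [mem_rowSpace_designMatrixACBC_iff, div_eq_one_iff_log_eq (hp 3) (hprod 0 1),
    div_eq_one_iff_log_eq (hprod 2 6) (hprod 4 5), hlog, hlog, hlog]
end

section
/- For a positive distribution on the three-way incomplete product, the no-second-order-AS-interaction constraint (p_{110} p_{101} p_{011})/(p_{100} p_{010} p_{001} p_{111}) = 1 holds if and only if CASR(A,B|C=0) = COR(A,B|C=1), if and only if CASR(A,C|B=0) = COR(A,C|B=1), if and only if CASR(B,C|A=0) = COR(B,C|A=1). -/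
theorem div_eq_div_iff_mul_div_mul_eq_one {G : Type*} [CommGroupWithZero G] {a b c d : G}
    (hb : b ≠ 0) (hc : c ≠ 0) (hd : d ≠ 0) : a / b = c / d ↔ a * d / (b * c) = 1 := by
  rw [div_eq_one_iff_eq (mul_ne_zero hb hc), div_eq_div_iff hb hd, mul_comm c b]

/-- The no-second-order-AS-interaction constraint holds iff
`CASR = COR` for each of the three conditionings. -/
theorem stmt15 (p100 p010 p001 p110 p101 p011 p111 : ℝ)
    (h100 : 0 < p100) (h010 : 0 < p010) (h001 : 0 < p001)
    (h110 : 0 < p110) (h101 : 0 < p101) (h011 : 0 < p011) (h111 : 0 < p111) :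
    ((p110 * p101 * p011) / (p100 * p010 * p001 * p111) = 1 ↔
        p110 / (p100 * p010) = (p111 * p001) / (p101 * p011)) ∧
    ((p110 * p101 * p011) / (p100 * p010 * p001 * p111) = 1 ↔
        p101 / (p100 * p001) = (p111 * p010) / (p110 * p011)) ∧
    ((p110 * p101 * p011) / (p100 * p010 * p001 * p111) = 1 ↔
        p011 / (p010 * p001) = (p111 * p100) / (p101 * p110)) := by
  refine ⟨?_, ?_, ?_⟩ <;>
    rw [div_eq_div_iff_mul_div_mul_eq_one (by positivity) (by positivity) (by positivity)] <;>
    ring_nf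
end
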